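/- arXiv:2005.12348 — 3 statements merged into one kernel-verified Lean document; each statement's English description precedes it below -/
import Mathlib

section
/- Let X be a finite set, Y₁ and Y₂ finite sets, and R₁ ⊆ X × Y₁, R₂ ⊆ X × Y₂ relations. If for every subset σ ⊆ X the total weights agree, i.e. #{y ∈ Y₁ : (x,y) ∈ R₁ for all x ∈ σ} = #{y ∈ Y₂ : (x,y) ∈ R₂ for all x ∈ σ}, then there exists a bijection g : Y₁ → Y₂ such that (x,y) ∈ R₁ if and only if (x, g(y)) ∈ R₂ for all x ∈ X and y ∈ Y₁. -/
/-!
Record each `y` by its profile `{x | R x y}`, a subset of `X`. The total weight of `σ` counts the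
`y` whose profile contains `σ`, i.e. it is the sum of the exact profile counts over all supersets
of `σ`. Since `Finset X` is finite, these upper sums determine the exact counts by downward
induction (Möbius inversion), so both relations have the same number of elements of each profile,
and matching these fibres bijectively gives the required bijection `Y₁ ≃ Y₂`.
-/

open Finset

theorem Finset.eq_of_sum_Ici_eq {α M : Type*} [PartialOrder α] [LocallyFiniteOrderTop α]
    [WellFoundedGT α] [AddCancelCommMonoid M] {f g : α → M}
    (h : ∀ a, ∑ b ∈ Ici a, f b = ∑ b ∈ Ici a, g b) : f = g := by
  funext a
  induction a using WellFoundedGT.induction with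
  | _ a ih =>
    have hIoi : ∑ b ∈ Ioi a, f b = ∑ b ∈ Ioi a, g b :=
      sum_congr rfl fun b hb => ih b (mem_Ioi.mp hb)
    have ha := h a
    rw [Ici_eq_cons_Ioi, sum_cons, sum_cons, hIoi] at ha
    exact add_right_cancel ha

theorem Nat.card_le_apply_eq_sum_Ici {Y α : Type*} [Finite Y] [PartialOrder α]
    [LocallyFiniteOrderTop α] (f : Y → α) (a : α) :
    Nat.card {y // a ≤ f y} = ∑ b ∈ Ici a, Nat.card {y // f y = b} := by
  classical
  have := Fintype.ofFinite Y
  simp only [Nat.card_eq_fintype_card, Fintype.card_subtype]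
  rw [card_eq_sum_card_fiberwise (f := f) (t := Ici a) fun y hy => by simpa using hy]
  refine sum_congr rfl fun b hb => ?_
  rw [filter_filter]
  refine congrArg card (filter_congr fun y _ => and_iff_right_of_imp fun hy => ?_)
  exact hy ▸ mem_Ici.mp hb

theorem exists_equiv_comp_eq_of_card_le_eq {Y₁ Y₂ α : Type*} [Finite Y₁] [Finite Y₂]
    [PartialOrder α] [LocallyFiniteOrderTop α] [WellFoundedGT α] {f₁ : Y₁ → α} {f₂ : Y₂ → α}
    (h : ∀ a, Nat.card {y // a ≤ f₁ y} = Nat.card {y // a ≤ f₂ y}) :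
    ∃ g : Y₁ ≃ Y₂, ∀ y, f₂ (g y) = f₁ y := by
  have hfibre : (fun b => Nat.card {y // f₁ y = b}) = fun b => Nat.card {y // f₂ y = b} :=
    eq_of_sum_Ici_eq fun a => by
      rw [← Nat.card_le_apply_eq_sum_Ici, ← Nat.card_le_apply_eq_sum_Ici, h]
  have e : ∀ b, {y // f₁ y = b} ≃ {y // f₂ y = b} := fun b =>
    (Finite.card_eq.mp (congrFun hfibre b)).some
  exact ⟨Equiv.ofFiberEquiv e, Equiv.ofFiberEquiv_map e⟩

/-- If the total weights of two relations agree on every subset of `X`,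
then the relations agree up to a bijection on the `Y` side. -/
theorem dowker_total_weight_reconstruct
    (X Y₁ Y₂ : Type*) [Fintype X] [Fintype Y₁] [Fintype Y₂]
    (R₁ : X → Y₁ → Prop) (R₂ : X → Y₂ → Prop)
    (h : ∀ σ : Set X,
      Nat.card {y : Y₁ // ∀ x ∈ σ, R₁ x y} =
        Nat.card {y : Y₂ // ∀ x ∈ σ, R₂ x y}) :
    ∃ g : Y₁ ≃ Y₂, ∀ (x : X) (y : Y₁), R₁ x y ↔ R₂ x (g y) := by
  classical
  let profile₁ (y : Y₁) : Finset X := {x | R₁ x y}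
  let profile₂ (y : Y₂) : Finset X := {x | R₂ x y}
  have hweight (s : Finset X) :
      Nat.card {y // s ≤ profile₁ y} = Nat.card {y // s ≤ profile₂ y} := by
    simpa [profile₁, profile₂, subset_iff] using h s
  obtain ⟨g, hg⟩ := exists_equiv_comp_eq_of_card_le_eq hweight
  refine ⟨g, fun x y => ?_⟩
  have hx := congrArg (x ∈ ·) (hg y)
  simpa [profile₁, profile₂] using hx.symm
end

section
/- Let R ⊆ X × Y be a relation. A nonempty finite subset σ ⊆ Y is a simplex of the dual Dowker complex D(Y,X,R^T) (i.e. there exists x ∈ X with (x,y) ∈ R for all y ∈ σ) if and only if there exists a simplex τ of the Dowker complex D(X,Y,R) (i.e. a nonempty finite τ ⊆ X admitting some y ∈ Y with (x,y) ∈ R for all x ∈ τ) such that σ ⊆ Y_τ, where Y_τ = {y ∈ Y : (x,y) ∈ R for all x ∈ τ}. Consequently, the space of global cosections of the cosheaf of costalks D(Y_τ,τ,(R|_{τ,Y_τ})^T) over D(X,Y,R) is simplicially isomorphic to D(Y,X,R^T). -/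
theorem dowker_global_cosections_dual_general
    (X Y : Type*) (R : X → Y → Prop)
    (σ : Set Y) (hne : σ.Nonempty) :
    (∃ x : X, ∀ y ∈ σ, R x y) ↔
      ∃ τ : Set X, τ.Nonempty ∧ τ.Finite ∧ (∃ y : Y, ∀ x ∈ τ, R x y) ∧
        σ ⊆ {y : Y | ∀ x ∈ τ, R x y} := by
  constructor
  · rintro ⟨x, hx⟩
    obtain ⟨y, hy⟩ := hne
    refine ⟨{x}, Set.singleton_nonempty x, Set.finite_singleton x, ⟨y, ?_⟩, ?_⟩
    · simpa using hx y hy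
    · simpa [Set.subset_def] using hx
  · rintro ⟨τ, ⟨x, hxτ⟩, -, -, hσ⟩
    exact ⟨x, fun y hy => hσ hy x hxτ⟩

/-- Global cosections of the cosheaf representation form the dual Dowker
complex: a nonempty finite `σ ⊆ Y` is a simplex of `D(Y,X,Rᵀ)` iff it is
contained in `Y_τ` for some simplex `τ` of `D(X,Y,R)`. -/
theorem dowker_global_cosections_dual
    (X Y : Type*) (R : X → Y → Prop)
    (σ : Set Y) (hne : σ.Nonempty) (hfin : σ.Finite) :
    (∃ x : X, ∀ y ∈ σ, R x y) ↔
      ∃ τ : Set X, τ.Nonempty ∧ τ.Finite ∧ (∃ y : Y, ∀ x ∈ τ, R x y) ∧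
        σ ⊆ {y : Y | ∀ x ∈ τ, R x y} :=
  dowker_global_cosections_dual_general X Y R σ hne
end

section
/- Let X and Y be finite sets and R ⊆ X × Y a relation. Let σ be a simplex of the dual Dowker complex D(Y,X,R^T), i.e. σ ⊆ Y is nonempty and there exists x ∈ X with (x,y) ∈ R for all y ∈ σ. Then the union of all simplices α of D(X,Y,R) satisfying σ ⊆ Y_α equals X_σ := {x ∈ X : (x,y) ∈ R for all y ∈ σ}; moreover X_σ is itself a simplex of D(X,Y,R) with σ ⊆ Y_{X_σ}, and it is the unique maximal such simplex under inclusion. (This is the key step in the cosheaf version of Dowker duality: Dual ∘ CoShvRep = CoShvRep ∘ Transp.) -/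
/-! `X_σ` and `Y_α` form an antitone Galois connection between subsets of `X` and of `Y`:
`σ ⊆ Y_α ↔ α ⊆ X_σ`. Hence `X_σ` contains every simplex `α` with `σ ⊆ Y_α`, and it is one
itself as soon as `σ` is a nonempty simplex of the dual complex, so it is the greatest element
of that family and therefore equal to its union. -/

namespace Dowker

variable {X Y : Type*} (R : X → Y → Prop)

/-- `Y_α` -/
def rightCommon (α : Set X) : Set Y := {y | ∀ x ∈ α, R x y}

/-- `X_σ` -/
def leftCommon (σ : Set Y) : Set X := {x | ∀ y ∈ σ, R x y}

/-- The simplices `α` of `D(X,Y,R)` with `σ ⊆ Y_α`. -/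
def simplicesOver (σ : Set Y) : Set (Set X) :=
  {α | α.Nonempty ∧ (∃ y, ∀ x ∈ α, R x y) ∧ σ ⊆ rightCommon R α}

variable {R}

theorem subset_rightCommon_iff {α : Set X} {σ : Set Y} :
    σ ⊆ rightCommon R α ↔ α ⊆ leftCommon R σ :=
  ⟨fun h _ hx _ hy => h hy _ hx, fun h _ hy _ hx => h hx _ hy⟩

theorem subset_rightCommon_leftCommon (σ : Set Y) : σ ⊆ rightCommon R (leftCommon R σ) :=
  subset_rightCommon_iff.2 subset_rfl

theorem exists_forall_leftCommon {σ : Set Y} (hσ : σ.Nonempty) :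
    ∃ y, ∀ x ∈ leftCommon R σ, R x y :=
  let ⟨y, hy⟩ := hσ
  ⟨y, fun _ hx => hx y hy⟩

theorem subset_leftCommon_of_mem_simplicesOver {σ : Set Y} {α : Set X}
    (hα : α ∈ simplicesOver R σ) : α ⊆ leftCommon R σ :=
  subset_rightCommon_iff.1 hα.2.2

theorem isGreatest_leftCommon_simplicesOver {σ : Set Y} (hσne : σ.Nonempty)
    (hσ : (leftCommon R σ).Nonempty) :
    IsGreatest (simplicesOver R σ) (leftCommon R σ) :=
  ⟨⟨hσ, exists_forall_leftCommon hσne, subset_rightCommon_leftCommon σ⟩,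
    fun _ hα => subset_leftCommon_of_mem_simplicesOver hα⟩

theorem biUnion_simplicesOver_eq_leftCommon {σ : Set Y} (hσne : σ.Nonempty)
    (hσ : (leftCommon R σ).Nonempty) :
    ⋃ α ∈ simplicesOver R σ, α = leftCommon R σ := by
  rw [← Set.sUnion_eq_biUnion, ← Set.sSup_eq_sUnion]
  exact (isGreatest_leftCommon_simplicesOver hσne hσ).csSup_eq

end Dowker

open Dowker in
theorem dowker_duality_unique_maximal_simplex_general
    (X Y : Type*) (R : X → Y → Prop)
    (σ : Set Y) (hσne : σ.Nonempty) (hσ : ∃ x : X, ∀ y ∈ σ, R x y) :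
    (⋃ α ∈ {α : Set X | α.Nonempty ∧ (∃ y : Y, ∀ x ∈ α, R x y) ∧
        σ ⊆ {y : Y | ∀ x ∈ α, R x y}}, α) = {x : X | ∀ y ∈ σ, R x y} ∧
    ({x : X | ∀ y ∈ σ, R x y}).Nonempty ∧
    (∃ y : Y, ∀ x ∈ {x : X | ∀ y' ∈ σ, R x y'}, R x y) ∧
    σ ⊆ {y : Y | ∀ x ∈ {x : X | ∀ y' ∈ σ, R x y'}, R x y} ∧
    (∀ α : Set X, α.Nonempty → (∃ y : Y, ∀ x ∈ α, R x y) →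
      σ ⊆ {y : Y | ∀ x ∈ α, R x y} → α ⊆ {x : X | ∀ y ∈ σ, R x y}) :=
  ⟨biUnion_simplicesOver_eq_leftCommon hσne hσ, hσ, exists_forall_leftCommon hσne,
    subset_rightCommon_leftCommon σ,
    fun _ hne hy hsub => subset_leftCommon_of_mem_simplicesOver ⟨hne, hy, hsub⟩⟩

/-- Key step of cosheaf Dowker duality: for a simplex `σ` of the dual Dowker
complex, the union of all simplices `α` of `D(X,Y,R)` with `σ ⊆ Y_α` equals
`X_σ = {x | ∀ y ∈ σ, R x y}`; moreover `X_σ` is itself such a simplex and is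
the unique maximal one under inclusion. -/
theorem dowker_duality_unique_maximal_simplex
    (X Y : Type*) [Fintype X] [Fintype Y] (R : X → Y → Prop)
    (σ : Set Y) (hσne : σ.Nonempty) (hσ : ∃ x : X, ∀ y ∈ σ, R x y) :
    (⋃ α ∈ {α : Set X | α.Nonempty ∧ (∃ y : Y, ∀ x ∈ α, R x y) ∧
        σ ⊆ {y : Y | ∀ x ∈ α, R x y}}, α) = {x : X | ∀ y ∈ σ, R x y} ∧
    ({x : X | ∀ y ∈ σ, R x y}).Nonempty ∧
    (∃ y : Y, ∀ x ∈ {x : X | ∀ y' ∈ σ, R x y'}, R x y) ∧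
    σ ⊆ {y : Y | ∀ x ∈ {x : X | ∀ y' ∈ σ, R x y'}, R x y} ∧
    (∀ α : Set X, α.Nonempty → (∃ y : Y, ∀ x ∈ α, R x y) →
      σ ⊆ {y : Y | ∀ x ∈ α, R x y} → α ⊆ {x : X | ∀ y ∈ σ, R x y}) :=
  dowker_duality_unique_maximal_simplex_general X Y R σ hσne hσ
end
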